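/- arXiv:1907.07650 — 2 statements merged into one kernel-verified Lean document; each statement's English description precedes it below -/
import Mathlib

section
/- Let T be a tree, let Supp(T) be the support of the null space of its adjacency matrix, Core(T) = ∪_{v ∈ Supp(T)} N(v) the set of neighbors of supported vertices, and F_N(T) the subgraph induced on vertices outside the closed neighborhood N[Supp(T)]. Then the matching number of T satisfies ν(T) = |Core(T)| + |V(F_N(T))|/2. -/
open SimpleGraph Matrix

attribute [local instance] Classical.propDecidable

noncomputable section

variable {V : Type*}

/-- A graph is singular if its adjacency matrix (over ℝ) has nontrivial kernel. -/
def IsSingular [Fintype V] (G : SimpleGraph V) : Prop :=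
  ∃ x : V → ℝ, x ≠ 0 ∧ G.adjMatrix ℝ *ᵥ x = 0

/-- The support of the null space of the adjacency matrix. -/
def nullSupp [Fintype V] (G : SimpleGraph V) : Set V :=
  {v | ∃ x : V → ℝ, G.adjMatrix ℝ *ᵥ x = 0 ∧ x v ≠ 0}

/-- The core: all neighbours of supported vertices. -/
def core [Fintype V] (G : SimpleGraph V) : Set V :=
  ⋃ v ∈ nullSupp G, G.neighborSet v

/-- Vertex set of the N-forest: complement of the closed neighbourhood of the support. -/
def fnVerts [Fintype V] (G : SimpleGraph V) : Set V :=
  (nullSupp G ∪ core G)ᶜ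

/-- A matching as a set of pairwise disjoint edges of `G`. -/
def IsMatchingSet (G : SimpleGraph V) (M : Set (Sym2 V)) : Prop :=
  M ⊆ G.edgeSet ∧ M.Pairwise fun e f => ∀ v : V, ¬(v ∈ e ∧ v ∈ f)

/-- `M` saturates `v`. -/
def Saturates (M : Set (Sym2 V)) (v : V) : Prop := ∃ e ∈ M, v ∈ e

/-- A perfect matching saturates every vertex. -/
def IsPerfectMatchingSet (G : SimpleGraph V) (M : Set (Sym2 V)) : Prop :=
  IsMatchingSet G M ∧ ∀ v : V, Saturates M v

/-- Matching number. -/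
def matchNum [Fintype V] (G : SimpleGraph V) : ℕ :=
  sSup {n | ∃ M : Set (Sym2 V), IsMatchingSet G M ∧ M.ncard = n}

/-- Maximum matchings. -/
def IsMaxMatching [Fintype V] (G : SimpleGraph V) (M : Set (Sym2 V)) : Prop :=
  IsMatchingSet G M ∧ M.ncard = matchNum G

/-- Independent set of vertices. -/
def IsIndepSet (G : SimpleGraph V) (I : Set V) : Prop :=
  I.Pairwise fun a b => ¬ G.Adj a b

/-- Independence number. -/
def indepNum [Fintype V] (G : SimpleGraph V) : ℕ :=
  sSup {n | ∃ I : Set V, _root_.IsIndepSet G I ∧ I.ncard = n}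

/-- Maximum independent sets. -/
def IsMaxIndep [Fintype V] (G : SimpleGraph V) (I : Set V) : Prop :=
  _root_.IsIndepSet G I ∧ I.ncard = _root_.indepNum G

/-- The graph `G` with all vertices in `S` deleted (kept as isolated vertices). -/
def avoid (G : SimpleGraph V) (S : Set V) : SimpleGraph V where
  Adj a b := G.Adj a b ∧ a ∉ S ∧ b ∉ S
  symm := ⟨fun a b h => ⟨h.1.symm, h.2.2, h.2.1⟩⟩
  loopless := ⟨fun a h => G.loopless.irrefl a h.1⟩

/-- `G` is unicyclic: connected with as many edges as vertices. -/
def IsUnicyclic [Fintype V] (G : SimpleGraph V) : Prop :=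
  G.Connected ∧ G.edgeFinset.card = Fintype.card V

/-- `C` is the vertex set of the (unique) cycle of `G`:
the induced subgraph on `C` is connected and 2-regular. -/
def IsCycleVerts [Fintype V] (G : SimpleGraph V) (C : Set V) : Prop :=
  C.Nonempty ∧ (G.induce C).Connected ∧ ∀ v : C, (G.induce C).degree v = 2

/-- Vertices of the pendant tree of `G` at the cycle vertex `v`: all vertices
reachable from `v` after deleting the other cycle vertices. -/
def pendantVerts (G : SimpleGraph V) (C : Set V) (v : V) : Set V :=
  {u | (avoid G (C \ {v})).Reachable v u}

lemma mem_pendantVerts_self (G : SimpleGraph V) (C : Set V) (v : V) :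
    v ∈ pendantVerts G C v := Reachable.refl v

/-- The pendant tree of `G` at `v` (as an induced subgraph). -/
def pendantTree (G : SimpleGraph V) (C : Set V) (v : V) :
    SimpleGraph (pendantVerts G C v) := G.induce (pendantVerts G C v)

/-- The rest of the graph, `G − G{v}`. -/
def pendantRest (G : SimpleGraph V) (C : Set V) (v : V) :
    SimpleGraph ((pendantVerts G C v)ᶜ : Set V) := G.induce (pendantVerts G C v)ᶜ

/-- `v` is matched in a graph `H`: every maximum matching of `H` saturates `v`. -/
def MatchedIn {W : Type*} [Fintype W] (H : SimpleGraph W) (w : W) : Prop :=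
  ∀ M : Set (Sym2 W), IsMaxMatching H M → Saturates M w

/-- A unicyclic graph is of Type I if some cycle vertex is matched in its pendant tree. -/
def TypeI [Fintype V] (G : SimpleGraph V) (C : Set V) : Prop :=
  ∃ v ∈ C, MatchedIn (pendantTree G C v) ⟨v, mem_pendantVerts_self G C v⟩

/-- Type II: every cycle vertex is missed by some maximum matching of its pendant tree. -/
def TypeII [Fintype V] (G : SimpleGraph V) (C : Set V) : Prop :=
  ∀ v ∈ C, ¬ MatchedIn (pendantTree G C v) ⟨v, mem_pendantVerts_self G C v⟩

end

/-!
Induct on the number of edges of the forest `G`, deleting the edges at the neighbour `u` of a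
leaf `v`; in the resulting forest `G'` both `u` and `v` are isolated. Some maximum matching
contains `uv`, so `ν(G) = ν(G') + 1`. Row `v` of the adjacency matrix forces every null vector
of `G` to vanish at `u`, and a null vector of `G'` becomes one of `G` after changing its value
at `v` alone (column `v` is the unit vector at `u`). Hence `Supp G' = Supp G ∪ {u, v}` and
`Core G' = Core G \ {u}`. Acyclicity gives `u ∈ Core G ↔ v ∈ Supp G`: restricting a null vector
that is nonzero at another neighbour `w` of `u` to the branch at `w` and correcting it at `v`
produces a null vector nonzero at `v`. So either `u` leaves the core and `F_N` is unchanged,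
or the core is unchanged and `F_N` loses `u` and `v`; either way the right-hand side drops by one.
-/

section Matching

variable {V : Type*} {G : SimpleGraph V}

lemma IsMatchingSet.subset {M N : Set (Sym2 V)} (hM : IsMatchingSet G M) (hNM : N ⊆ M) :
    IsMatchingSet G N :=
  ⟨hNM.trans hM.1, hM.2.mono hNM⟩

variable [Fintype V]

lemma bddAbove_matchingSizes (G : SimpleGraph V) :
    BddAbove {n | ∃ M : Set (Sym2 V), IsMatchingSet G M ∧ M.ncard = n} :=
  ⟨(Set.univ : Set (Sym2 V)).ncard, by
    rintro n ⟨M, -, rfl⟩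
    exact Set.ncard_le_ncard (Set.subset_univ M)⟩

lemma ncard_le_matchNum {M : Set (Sym2 V)} (hM : IsMatchingSet G M) : M.ncard ≤ matchNum G :=
  le_csSup (bddAbove_matchingSizes G) ⟨M, hM, rfl⟩

lemma exists_isMatchingSet_ncard_eq_matchNum (G : SimpleGraph V) :
    ∃ M : Set (Sym2 V), IsMatchingSet G M ∧ M.ncard = matchNum G := by
  refine Nat.sSup_mem ?_ (bddAbove_matchingSizes G)
  exact ⟨0, ∅, ⟨Set.empty_subset _, Set.pairwise_empty _⟩, Set.ncard_empty _⟩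

lemma matchNum_bot : matchNum (⊥ : SimpleGraph V) = 0 := by
  obtain ⟨M, hM, hcard⟩ := exists_isMatchingSet_ncard_eq_matchNum (⊥ : SimpleGraph V)
  rw [← hcard, Set.ncard_eq_zero, ← Set.subset_empty_iff, ← edgeSet_bot]
  exact hM.1

end Matching

section Avoid

variable {V : Type*} {G : SimpleGraph V} {u v : V}

@[simp]
lemma avoid_singleton_adj {a b : V} : (avoid G {u}).Adj a b ↔ G.Adj a b ∧ a ≠ u ∧ b ≠ u :=
  Iff.rfl

lemma mem_edgeSet_avoid_singleton {e : Sym2 V} :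
    e ∈ (avoid G {u}).edgeSet ↔ e ∈ G.edgeSet ∧ u ∉ e := by
  induction e using Sym2.ind with
  | h a b => simp [eq_comm]

lemma notMem_of_mem_edgeSet_of_forall_not_adj {H : SimpleGraph V} {c : V}
    (hc : ∀ w, ¬ H.Adj c w) {e : Sym2 V} (he : e ∈ H.edgeSet) : c ∉ e := by
  induction e using Sym2.ind with
  | h a b =>
    rw [Sym2.mem_iff]
    rintro (rfl | rfl)
    exacts [hc b he, hc a he.symm]

lemma avoid_isAcyclic (hA : G.IsAcyclic) (S : Set V) : (avoid G S).IsAcyclic :=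
  hA.anti fun _ _ h => h.1

lemma ncard_edgeSet_avoid_lt [Fintype V] (huv : G.Adj u v) :
    (avoid G {u}).edgeSet.ncard < G.edgeSet.ncard := by
  refine Set.ncard_lt_ncard ⟨fun e he => (mem_edgeSet_avoid_singleton.mp he).1, fun h => ?_⟩
  exact (mem_edgeSet_avoid_singleton.mp (h huv)).2 (Sym2.mem_mk_left u v)

lemma matchNum_eq_matchNum_avoid_add_one [Fintype V] (huv : G.Adj u v)
    (hleaf : ∀ w, G.Adj v w → w = u) :
    matchNum G = matchNum (avoid G {u}) + 1 := by
  apply le_antisymm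
  · obtain ⟨M, hM, hcard⟩ := exists_isMatchingSet_ncard_eq_matchNum G
    obtain ⟨e, he⟩ : ∃ e, ∀ f ∈ M, f ≠ e → u ∉ f := by
      by_cases h : ∃ e ∈ M, u ∈ e
      · obtain ⟨e, heM, hue⟩ := h
        exact ⟨e, fun f hf hfe huf => hM.2 hf heM hfe u ⟨huf, hue⟩⟩
      · push Not at h
        exact ⟨s(u, v), fun f hf _ => h f hf⟩
    have hM' : IsMatchingSet (avoid G {u}) (M \ {e}) :=
      ⟨fun f hf => mem_edgeSet_avoid_singleton.mpr ⟨hM.1 hf.1, he f hf.1 hf.2⟩,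
        (hM.subset Set.sdiff_subset).2⟩
    calc matchNum G = M.ncard := hcard.symm
      _ ≤ (M \ {e}).ncard + 1 := by simpa using Set.ncard_le_ncard_sdiff_add_ncard M {e}
      _ ≤ matchNum (avoid G {u}) + 1 := by gcongr; exact ncard_le_matchNum hM'
  · obtain ⟨M, hM, hcard⟩ := exists_isMatchingSet_ncard_eq_matchNum (avoid G {u})
    have huM : ∀ f ∈ M, u ∉ f := fun f hf => (mem_edgeSet_avoid_singleton.mp (hM.1 hf)).2
    have hvM : ∀ f ∈ M, v ∉ f := fun f hf =>
      notMem_of_mem_edgeSet_of_forall_not_adj (H := avoid G {u})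
        (fun w h => h.2.2 (hleaf w h.1)) (hM.1 hf)
    have huvM : s(u, v) ∉ M := fun h => huM _ h (Sym2.mem_mk_left u v)
    have hdisj : ∀ f ∈ M, ∀ w ∈ s(u, v), w ∉ f := by
      intro f hf w hw
      rcases Sym2.mem_iff.mp hw with rfl | rfl
      exacts [huM f hf, hvM f hf]
    have hM' : IsMatchingSet G (insert s(u, v) M) :=
      ⟨Set.insert_subset huv fun f hf => (mem_edgeSet_avoid_singleton.mp (hM.1 hf)).1,
        hM.2.insert_of_notMem huvM fun f hf =>
          ⟨fun w hw => hdisj f hf w hw.1 hw.2, fun w hw => hdisj f hf w hw.2 hw.1⟩⟩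
    calc matchNum (avoid G {u}) + 1 = (insert s(u, v) M).ncard := by
          rw [Set.ncard_insert_of_notMem huvM, hcard]
      _ ≤ matchNum G := ncard_le_matchNum hM'

end Avoid

section NullSupport

variable {V : Type*} [Fintype V] {G : SimpleGraph V} {u v : V}

lemma avoid_mulVec_apply_self (x : V → ℝ) : ((avoid G {u}).adjMatrix ℝ *ᵥ x) u = 0 := by
  simp [mulVec, dotProduct, adjMatrix_apply]

lemma avoid_mulVec_apply_of_ne (x : V → ℝ) {t : V} (ht : t ≠ u) :
    ((avoid G {u}).adjMatrix ℝ *ᵥ x) t = (G.adjMatrix ℝ *ᵥ Function.update x u 0) t := by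
  simp only [mulVec, dotProduct, adjMatrix_apply]
  refine Finset.sum_congr rfl fun a _ => ?_
  by_cases ha : a = u <;> simp [ha, ht]

lemma mem_nullSupp_of_forall_not_adj {H : SimpleGraph V} {c : V} (hc : ∀ w, ¬ H.Adj c w) :
    c ∈ nullSupp H :=
  ⟨Pi.single c 1, by ext t; simpa using fun h => hc t h.symm, by simp⟩

lemma mem_core_iff {H : SimpleGraph V} {z : V} : z ∈ core H ↔ ∃ t ∈ nullSupp H, H.Adj t z := by
  simp [core]

lemma fnVerts_bot : fnVerts (⊥ : SimpleGraph V) = ∅ := by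
  have : nullSupp (⊥ : SimpleGraph V) = Set.univ :=
    Set.eq_univ_of_forall fun c => mem_nullSupp_of_forall_not_adj fun _ => id
  simp [fnVerts, this]

lemma core_bot : core (⊥ : SimpleGraph V) = ∅ := by
  ext z
  simp [mem_core_iff]

lemma neighborFinset_eq_singleton_of_leaf (huv : G.Adj u v) (hleaf : ∀ w, G.Adj v w → w = u) :
    G.neighborFinset v = {u} := by
  ext w
  simpa using ⟨hleaf w, fun h => h ▸ huv.symm⟩

lemma adjMatrix_mulVec_single_of_leaf (huv : G.Adj u v) (hleaf : ∀ w, G.Adj v w → w = u) :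
    G.adjMatrix ℝ *ᵥ Pi.single v 1 = Pi.single u 1 := by
  ext t
  rw [mulVec_single_one]
  by_cases ht : t = u
  · subst ht
    simp [huv]
  · simpa [ht] using fun h : G.Adj t v => ht (hleaf t h.symm)

lemma apply_eq_zero_of_mulVec_eq_zero_of_leaf (huv : G.Adj u v)
    (hleaf : ∀ w, G.Adj v w → w = u) {x : V → ℝ} (hx : G.adjMatrix ℝ *ᵥ x = 0) : x u = 0 := by
  simpa [adjMatrix_mulVec_apply, neighborFinset_eq_singleton_of_leaf huv hleaf] using
    congrFun hx v

lemma notMem_nullSupp_of_leaf (huv : G.Adj u v) (hleaf : ∀ w, G.Adj v w → w = u) :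
    u ∉ nullSupp G :=
  fun ⟨_, hx, hxu⟩ => hxu (apply_eq_zero_of_mulVec_eq_zero_of_leaf huv hleaf hx)

lemma mulVec_sub_smul_single_eq_zero_of_leaf (huv : G.Adj u v)
    (hleaf : ∀ w, G.Adj v w → w = u) {y : V → ℝ} (hy : ∀ t ≠ u, (G.adjMatrix ℝ *ᵥ y) t = 0) :
    G.adjMatrix ℝ *ᵥ (y - (G.adjMatrix ℝ *ᵥ y) u • Pi.single v 1) = 0 := by
  rw [mulVec_sub, mulVec_smul, adjMatrix_mulVec_single_of_leaf huv hleaf]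
  ext t
  by_cases ht : t = u
  · subst ht
    simp
  · simp [ht, hy t ht]

lemma nullSupp_avoid_of_leaf (huv : G.Adj u v) (hleaf : ∀ w, G.Adj v w → w = u) :
    nullSupp (avoid G {u}) = insert u (insert v (nullSupp G)) := by
  ext z
  constructor
  · rintro ⟨y, hy, hyz⟩
    by_cases hzu : z = u
    · exact Or.inl hzu
    by_cases hzv : z = v
    · exact Or.inr (Or.inl hzv)
    have hy' : ∀ t ≠ u, (G.adjMatrix ℝ *ᵥ Function.update y u 0) t = 0 := fun t ht => by
      rw [← avoid_mulVec_apply_of_ne y ht, hy, Pi.zero_apply]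
    refine Or.inr (Or.inr ⟨_, mulVec_sub_smul_single_eq_zero_of_leaf huv hleaf hy', ?_⟩)
    simpa [hzu, hzv] using hyz
  · rintro (rfl | rfl | ⟨x, hx, hxz⟩)
    · exact mem_nullSupp_of_forall_not_adj fun _ h => h.2.1 rfl
    · exact mem_nullSupp_of_forall_not_adj fun w h => h.2.2 (hleaf w h.1)
    · refine ⟨x, funext fun t => ?_, hxz⟩
      by_cases ht : t = u
      · rw [ht, avoid_mulVec_apply_self, Pi.zero_apply]
      · rw [avoid_mulVec_apply_of_ne x ht, Function.update_eq_self_iff.mpr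
          (apply_eq_zero_of_mulVec_eq_zero_of_leaf huv hleaf hx).symm, hx]

lemma core_avoid_of_leaf (huv : G.Adj u v) (hleaf : ∀ w, G.Adj v w → w = u) :
    core (avoid G {u}) = core G \ {u} := by
  ext z
  simp only [mem_core_iff, nullSupp_avoid_of_leaf huv hleaf, Set.mem_insert_iff,
    avoid_singleton_adj, Set.mem_sdiff, Set.mem_singleton_iff]
  constructor
  · rintro ⟨t, (rfl | rfl | ht), htz, htu, hzu⟩
    · exact absurd rfl htu
    · exact absurd (hleaf z htz) hzu
    · exact ⟨⟨t, ht, htz⟩, hzu⟩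
  · rintro ⟨⟨t, ht, htz⟩, hzu⟩
    have htu : t ≠ u := fun h => notMem_nullSupp_of_leaf huv hleaf (h ▸ ht)
    exact ⟨t, Or.inr (Or.inr ht), htz, htu, hzu⟩

lemma fnVerts_avoid_of_leaf (huv : G.Adj u v) (hleaf : ∀ w, G.Adj v w → w = u) :
    fnVerts (avoid G {u}) = fnVerts G \ {u, v} := by
  ext z
  simp only [fnVerts, nullSupp_avoid_of_leaf huv hleaf, core_avoid_of_leaf huv hleaf]
  simp only [Set.mem_compl_iff, Set.mem_union, Set.mem_insert_iff, Set.mem_sdiff,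
    Set.mem_singleton_iff]
  tauto

end NullSupport

section Forest

variable {V : Type*} {G : SimpleGraph V} {u v : V}

lemma SimpleGraph.IsAcyclic.exists_leaf [Fintype V] (hA : G.IsAcyclic) {a b : V}
    (hab : G.Adj a b) :
    ∃ u v, G.Adj u v ∧ ∀ w, G.Adj v w → w = u := by
  have : Nonempty V := ⟨a⟩
  obtain ⟨x, y, p, hp, hmax⟩ := Walk.exists_isPath_forall_isPath_length_le_length G
  have hnil : ¬p.Nil := fun h => by
    simpa [h.length_eq_zero] using hmax a b (Walk.cons hab Walk.nil) (by simp [hab.ne])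
  refine ⟨p.penultimate, y, p.adj_penultimate hnil,
    fun w hw => hA.eq_penultimate_of_adj_end hp hw ?_⟩
  by_contra hws
  simpa using hmax _ _ (p.concat hw) (hp.concat hws hw)

lemma eq_of_reachable_of_forall_not_adj {H : SimpleGraph V} {a c : V} (hc : ∀ w, ¬ H.Adj c w)
    (h : H.Reachable a c) : a = c := by
  obtain ⟨p⟩ := h.symm
  cases p with
  | nil => rfl
  | cons hadj _ => exact absurd hadj (hc _)

lemma eq_of_adj_of_reachable_avoid (hA : G.IsAcyclic) {w z : V} (huw : G.Adj u w)
    (huz : G.Adj u z) (hwz : (avoid G {u}).Reachable w z) : z = w := by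
  by_contra hzw
  refine isBridge_iff.mp (isAcyclic_iff_forall_adj_isBridge.mp hA huw) ?_
  have hle : avoid G {u} ≤ G.deleteEdges {s(u, w)} := fun a b hab => by
    simp_all
  have huz' : (G.deleteEdges {s(u, w)}).Adj u z := by
    simp [huz, hzw, huz.ne']
  exact huz'.reachable.trans (hwz.mono hle).symm

lemma mulVec_indicator_apply_eq_zero [Fintype V] {x : V → ℝ} {S : Set V}
    (hx : G.adjMatrix ℝ *ᵥ x = 0) (hxu : x u = 0) (huS : u ∉ S)
    (hS : ∀ a ∈ S, ∀ b, G.Adj a b → b ≠ u → b ∈ S) :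
    ∀ t ≠ u, (G.adjMatrix ℝ *ᵥ S.indicator x) t = 0 := by
  intro t ht
  rw [adjMatrix_mulVec_apply]
  by_cases htS : t ∈ S
  · calc ∑ a ∈ G.neighborFinset t, S.indicator x a = ∑ a ∈ G.neighborFinset t, x a := by
          refine Finset.sum_congr rfl fun a ha => ?_
          by_cases hau : a = u
          · simp [hau, huS, hxu]
          · exact Set.indicator_of_mem (hS t htS a ((mem_neighborFinset _ _ _).mp ha) hau) x
      _ = 0 := by rw [← adjMatrix_mulVec_apply, hx, Pi.zero_apply]
  · refine Finset.sum_eq_zero fun a ha => Set.indicator_of_notMem (fun haS => htS ?_) x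
    exact hS a haS t ((mem_neighborFinset _ _ _).mp ha).symm ht

lemma mem_nullSupp_of_adj_of_mem_nullSupp [Fintype V] (hA : G.IsAcyclic) (huv : G.Adj u v)
    (hleaf : ∀ w, G.Adj v w → w = u) {w : V} (huw : G.Adj u w) (hw : w ∈ nullSupp G) :
    v ∈ nullSupp G := by
  by_cases hwv : w = v
  · exact hwv ▸ hw
  obtain ⟨x, hx, hxw⟩ := hw
  set S := {z | (avoid G {u}).Reachable w z}
  have huS : u ∉ S := fun h =>
    huw.ne (eq_of_reachable_of_forall_not_adj (H := avoid G {u}) (fun _ h => h.2.1 rfl) h).symm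
  have hvS : v ∉ S := fun h =>
    hwv (eq_of_reachable_of_forall_not_adj (H := avoid G {u}) (fun w h => h.2.2 (hleaf w h.1)) h)
  have hS : ∀ a ∈ S, ∀ b, G.Adj a b → b ≠ u → b ∈ S := fun a ha b hab hbu =>
    ha.trans (Adj.reachable ⟨hab, fun hau => huS (hau ▸ ha), hbu⟩)
  have hy := mulVec_indicator_apply_eq_zero hx
    (apply_eq_zero_of_mulVec_eq_zero_of_leaf huv hleaf hx) huS hS
  have hyu : (G.adjMatrix ℝ *ᵥ S.indicator x) u = x w := by
    rw [adjMatrix_mulVec_apply, Finset.sum_eq_single w]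
    · exact Set.indicator_of_mem (s := S) (Reachable.refl w) x
    · exact fun a ha haw => Set.indicator_of_notMem (s := S) (fun haS =>
        haw (eq_of_adj_of_reachable_avoid hA huw ((mem_neighborFinset _ _ _).mp ha) haS)) x
    · exact fun h => absurd ((mem_neighborFinset _ _ _).mpr huw) h
  refine ⟨_, mulVec_sub_smul_single_eq_zero_of_leaf huv hleaf hy, ?_⟩
  simpa [hyu, hvS] using hxw

lemma mem_core_iff_mem_nullSupp_of_leaf [Fintype V] (hA : G.IsAcyclic) (huv : G.Adj u v)
    (hleaf : ∀ w, G.Adj v w → w = u) : u ∈ core G ↔ v ∈ nullSupp G :=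
  mem_core_iff.trans ⟨fun ⟨_, hw, hwu⟩ => mem_nullSupp_of_adj_of_mem_nullSupp hA huv hleaf
    hwu.symm hw, fun hv => ⟨v, hv, huv.symm⟩⟩

lemma ncard_core_add_ncard_fnVerts_div_two_of_leaf [Fintype V] (hA : G.IsAcyclic)
    (huv : G.Adj u v) (hleaf : ∀ w, G.Adj v w → w = u) :
    (core G).ncard + (fnVerts G).ncard / 2 =
      (core (avoid G {u})).ncard + (fnVerts (avoid G {u})).ncard / 2 + 1 := by
  rw [core_avoid_of_leaf huv hleaf, fnVerts_avoid_of_leaf huv hleaf]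
  have hu := notMem_nullSupp_of_leaf huv hleaf
  by_cases hv : v ∈ nullSupp G
  · have hcore : u ∈ core G := (mem_core_iff_mem_nullSupp_of_leaf hA huv hleaf).mpr hv
    have hdisj : Disjoint (fnVerts G) {u, v} := by simp [fnVerts, hcore, hv]
    rw [hdisj.sdiff_eq_left, ← Set.ncard_sdiff_singleton_add_one hcore]
    omega
  · have hcore : u ∉ core G := mt (mem_core_iff_mem_nullSupp_of_leaf hA huv hleaf).mp hv
    have hvcore : v ∉ core G := fun h => by
      obtain ⟨t, ht, htv⟩ := mem_core_iff.mp h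
      exact hu (hleaf t htv.symm ▸ ht)
    have hsub : {u, v} ⊆ fnVerts G := by simp [Set.insert_subset_iff, fnVerts, *]
    have hcard : 2 ≤ (fnVerts G).ncard := Set.ncard_pair huv.ne ▸ Set.ncard_le_ncard hsub
    rw [Set.sdiff_singleton_eq_self hcore, Set.ncard_sdiff hsub, Set.ncard_pair huv.ne]
    omega

end Forest

theorem matchNum_eq_of_isAcyclic {V : Type*} [Fintype V] {G : SimpleGraph V}
    (hA : G.IsAcyclic) :
    matchNum G = (core G).ncard + (fnVerts G).ncard / 2 := by
  rcases eq_or_ne G ⊥ with rfl | hG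
  · simp [matchNum_bot, core_bot, fnVerts_bot]
  obtain ⟨a, b, hab⟩ := ne_bot_iff_exists_adj.mp hG
  obtain ⟨u, v, huv, hleaf⟩ := hA.exists_leaf hab
  rw [matchNum_eq_matchNum_avoid_add_one huv hleaf,
    matchNum_eq_of_isAcyclic (avoid_isAcyclic hA {u}),
    ncard_core_add_ncard_fnVerts_div_two_of_leaf hA huv hleaf]
termination_by G.edgeSet.ncard
decreasing_by exact ncard_edgeSet_avoid_lt huv

theorem matchNum_tree_formula {V : Type*} [Fintype V] (G : SimpleGraph V) (hT : G.IsTree) :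
    matchNum G = (core G).ncard + (fnVerts G).ncard / 2 :=
  matchNum_eq_of_isAcyclic hT.isAcyclic
end

section
/- Let T be a tree and C ⊆ Core(T) a nonempty subset of the core. Then the number of supported neighbors strictly exceeds |C|: |N(C) ∩ Supp(T)| > |C|. -/
open SimpleGraph Matrix

attribute [local instance] Classical.propDecidable

/-!
Take a null vector `x` of `A(T)` that is nonzero on all of `Supp(T)`; it exists because a
finite union of proper subspaces of the null space cannot cover it. The row of `A(T)` at a
vertex `u` says that the values of `x` on the neighbours of `u` sum to zero, so `u` never has
exactly one neighbour where `x ≠ 0`. In a forest this forces `x` to vanish at an end of every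
edge: otherwise the vertices where `x ≠ 0` that have such a neighbour would span a subforest of
minimum degree at least two. Hence `Core(T)` and `Supp(T)` are disjoint, and every `c ∈ C` has,
besides a supported neighbour `v`, a second neighbour where `x ≠ 0`. The edges between `C` and
`S = N(C) ∩ Supp(T)` thus form a forest on `|C| + |S|` vertices with at least `2|C|` edges,
so `2|C| < |C| + |S|`.
-/

open Finset

theorem Submodule.exists_mem_forall_apply_ne_zero {K n : Type*} [Field K] [Infinite K] [Finite n]
    (W : Submodule K (n → K)) :
    ∃ x ∈ W, ∀ j, (∃ y ∈ W, y j ≠ 0) → x j ≠ 0 := by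
  have := Fintype.ofFinite n
  let p : {j // ∃ y ∈ W, y j ≠ 0} → Submodule K W := fun j =>
    LinearMap.ker ((LinearMap.proj j.1).comp W.subtype)
  have hp : ∀ j, p j ≠ ⊤ := by
    rintro ⟨j, y, hyW, hyj⟩ htop
    have : (⟨y, hyW⟩ : W) ∈ p ⟨j, y, hyW, hyj⟩ := htop ▸ Submodule.mem_top
    exact hyj this
  obtain ⟨x, -, hx⟩ := Set.exists_of_ssubset
    (Submodule.iUnion_ssubset_of_forall_ne_top_of_card_lt univ p hp (by simp))
  refine ⟨x, x.2, fun j hj hxj => hx ?_⟩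
  have hxp : x ∈ p ⟨j, hj⟩ := LinearMap.mem_ker.mpr hxj
  exact Set.mem_biUnion (mem_univ _) hxp

namespace SimpleGraph

variable {V : Type*} {G : SimpleGraph V}

lemma exists_adj_ne_zero_of_adjMatrix_mulVec_eq_zero [Fintype V] [DecidableRel G.Adj]
    {R : Type*} [NonAssocSemiring R] {x : V → R} (hx : G.adjMatrix R *ᵥ x = 0) {u v : V}
    (huv : G.Adj u v) (hxv : x v ≠ 0) : ∃ w ≠ v, G.Adj u w ∧ x w ≠ 0 := by
  by_contra! h
  have hrow := congrFun hx u
  rw [adjMatrix_mulVec_apply, Pi.zero_apply,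
    sum_eq_single_of_mem v ((mem_neighborFinset G u v).mpr huv)
      fun w hw hwv => h w hwv ((mem_neighborFinset G u w).mp hw)] at hrow
  exact hxv hrow

lemma IsAcyclic.card_edgeFinset_lt [Fintype V] [Nonempty V] [Fintype G.edgeSet]
    (hG : G.IsAcyclic) : #G.edgeFinset < Fintype.card V := by
  obtain ⟨T, hGT, -, hT⟩ := connected_top.exists_isTree_le_of_le_of_isAcyclic le_top hG
  calc #G.edgeFinset ≤ #T.edgeFinset := card_le_card (edgeFinset_mono hGT)
    _ < Fintype.card V := Nat.lt_of_succ_le hT.card_edgeFinset.le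

lemma IsAcyclic.card_edgeFinset_lt_of_support_subset [Fintype V] [DecidableRel G.Adj]
    (hG : G.IsAcyclic) {s : Finset V} (hs : s.Nonempty) (hsupp : G.support ⊆ s) :
    #G.edgeFinset < #s := by
  have : Nonempty s := hs.to_subtype
  rw [← card_edgeFinset_induce_of_support_subset hsupp, ← Fintype.card_coe s]
  convert (hG.induce s).card_edgeFinset_lt using 3
  simp

lemma IsAcyclic.exists_mem_card_adj_lt_two [Fintype V] [DecidableRel G.Adj] (hG : G.IsAcyclic)
    {s : Finset V} (hs : s.Nonempty) : ∃ v ∈ s, #{w ∈ s | G.Adj v w} < 2 := by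
  by_contra! h
  -- the subgraph induced on `s`, kept on the vertex type `V`
  set H := G.between s s
  have hdeg : ∀ v ∈ s, H.degree v = #{w ∈ s | G.Adj v w} := fun v hv => by
    rw [← card_neighborFinset_eq_degree]
    congr 1
    ext w
    simp [H, between_adj, hv, and_comm]
  have hsupp : H.support ⊆ s := fun v ⟨w, hvw⟩ =>
    (between_adj.mp hvw).2.elim And.left And.left
  have hsum : ∑ v ∈ s, H.degree v = 2 * #H.edgeFinset := by
    rw [← sum_degrees_eq_twice_card_edges]
    exact sum_subset (subset_univ s) fun v _ hv =>
      (H.degree_eq_zero_iff_notMem_support v).mpr fun hv' => hv (hsupp hv')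
  have hlt : #H.edgeFinset < #s :=
    (hG.anti between_le).card_edgeFinset_lt_of_support_subset hs hsupp
  have hle : 2 * #s ≤ ∑ v ∈ s, H.degree v := by
    simpa [mul_comm] using
      card_nsmul_le_sum s (H.degree ·) 2 fun v hv => (h v hv).trans (hdeg v hv).ge
  omega

lemma IsAcyclic.card_lt_card_of_two_le_card_adj [Fintype V] [DecidableEq V] [DecidableRel G.Adj]
    (hG : G.IsAcyclic) {s t : Finset V} (hst : Disjoint s t) (hs : s.Nonempty)
    (h : ∀ v ∈ s, 2 ≤ #{w ∈ t | G.Adj v w}) : #s < #t := by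
  set H := G.between s t
  have hH : H.IsBipartiteWith s t := between_isBipartiteWith (disjoint_coe.mpr hst)
  have hdeg : ∀ v ∈ s, H.degree v = #{w ∈ t | G.Adj v w} := fun v hv => by
    rw [← card_neighborFinset_eq_degree, isBipartiteWith_neighborFinset hH hv]
    congr 1
    exact filter_congr fun w hw => by simp [H, between_adj, hv, hw]
  have hle : 2 * #s ≤ ∑ v ∈ s, H.degree v := by
    simpa [mul_comm] using
      card_nsmul_le_sum s (H.degree ·) 2 fun v hv => (h v hv).trans (hdeg v hv).ge
  have hlt : #H.edgeFinset < #(s ∪ t) :=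
    (hG.anti between_le).card_edgeFinset_lt_of_support_subset (hs.mono subset_union_left)
      (by simpa using isBipartiteWith_support_subset hH)
  rw [← isBipartiteWith_sum_degrees_eq_card_edges hH, card_union_of_disjoint hst] at hlt
  omega

lemma IsAcyclic.eq_zero_or_eq_zero_of_adjMatrix_mulVec_eq_zero [Fintype V] [DecidableRel G.Adj]
    {R : Type*} [NonAssocSemiring R] (hG : G.IsAcyclic) {x : V → R}
    (hx : G.adjMatrix R *ᵥ x = 0) {u v : V} (huv : G.Adj u v) : x u = 0 ∨ x v = 0 := by
  by_contra! h
  let s : Finset V := {w | x w ≠ 0 ∧ ∃ w', G.Adj w w' ∧ x w' ≠ 0}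
  have hmem : ∀ {a b}, G.Adj a b → x a ≠ 0 → x b ≠ 0 → b ∈ {w ∈ s | G.Adj a w} :=
    fun {a b} hab ha hb => by simpa [s, hab, hb] using ⟨a, hab.symm, ha⟩
  have hu : u ∈ s := by simpa [s, h.1] using ⟨v, huv, h.2⟩
  obtain ⟨w, hw, hlt⟩ := hG.exists_mem_card_adj_lt_two ⟨u, hu⟩
  obtain ⟨hxw, w₁, hww₁, hxw₁⟩ := (mem_filter.mp hw).2
  obtain ⟨w₂, hne, hww₂, hxw₂⟩ :=
    exists_adj_ne_zero_of_adjMatrix_mulVec_eq_zero hx hww₁ hxw₁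
  exact hlt.not_ge (one_lt_card.mpr
    ⟨w₁, hmem hww₁ hxw hxw₁, w₂, hmem hww₂ hxw hxw₂, hne.symm⟩)

end SimpleGraph

section NullSupport

variable {V : Type*} [Fintype V]

lemma exists_mulVec_eq_zero_forall_mem_nullSupp_ne_zero (G : SimpleGraph V) :
    ∃ x : V → ℝ, G.adjMatrix ℝ *ᵥ x = 0 ∧ ∀ v ∈ nullSupp G, x v ≠ 0 := by
  obtain ⟨x, hx, hsupp⟩ :=
    (LinearMap.ker (G.adjMatrix ℝ).mulVecLin).exists_mem_forall_apply_ne_zero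
  exact ⟨x, hx, hsupp⟩

variable {G : SimpleGraph V}

lemma disjoint_core_nullSupp (hG : G.IsAcyclic) : Disjoint (core G) (nullSupp G) := by
  obtain ⟨x, hx, hxS⟩ := exists_mulVec_eq_zero_forall_mem_nullSupp_ne_zero G
  refine Set.disjoint_left.mpr fun c hc hcS => ?_
  obtain ⟨v, hv, hvc⟩ := Set.mem_iUnion₂.mp hc
  exact (hG.eq_zero_or_eq_zero_of_adjMatrix_mulVec_eq_zero hx hvc).elim (hxS v hv) (hxS c hcS)

lemma nontrivial_neighborSet_inter_nullSupp_of_mem_core {c : V} (hc : c ∈ core G) :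
    (G.neighborSet c ∩ nullSupp G).Nontrivial := by
  obtain ⟨x, hx, hxS⟩ := exists_mulVec_eq_zero_forall_mem_nullSupp_ne_zero G
  obtain ⟨v, hv, hvc⟩ := Set.mem_iUnion₂.mp hc
  obtain ⟨w, hwv, hcw, hxw⟩ :=
    exists_adj_ne_zero_of_adjMatrix_mulVec_eq_zero hx hvc.symm (hxS v hv)
  exact ⟨v, ⟨hvc.symm, hv⟩, w, ⟨hcw, x, hx, hxw⟩, hwv.symm⟩

end NullSupport

theorem core_subset_neighbors_supp {V : Type*} [Fintype V] (G : SimpleGraph V) (hT : G.IsTree)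
    (C : Set V) (hC : C ⊆ core G) (hne : C.Nonempty) :
    C.ncard < ((⋃ c ∈ C, G.neighborSet c) ∩ nullSupp G).ncard := by
  set S := (⋃ c ∈ C, G.neighborSet c) ∩ nullSupp G
  have hCS : Disjoint C S := (disjoint_core_nullSupp hT.isAcyclic).mono hC Set.inter_subset_right
  rw [Set.ncard_eq_toFinset_card' C, Set.ncard_eq_toFinset_card' S]
  refine hT.isAcyclic.card_lt_card_of_two_le_card_adj (by simpa using hCS) (by simpa using hne)
    fun c hc => one_lt_card_iff_nontrivial.mpr ?_
  rw [Set.mem_toFinset] at hc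
  refine (nontrivial_neighborSet_inter_nullSupp_of_mem_core (hC hc)).mono fun w ⟨hcw, hw⟩ => ?_
  simpa [S, hw] using ⟨⟨c, hc, hcw⟩, hcw⟩
end
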